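/- Let G be a group, I an index type, and for each i ∈ I let Y_i be a set with an effective G-action such that each Y_i contains a point with trivial stabilizer. Suppose given group automorphisms h_{ij} : G → G, elements γ_{ijk} ∈ G, and injective maps φ_{ij} : Y_j → Y_i that are h_{ij}-equivariant (φ_{ij}(g·y) = h_{ij}(g)·φ_{ij}(y)), satisfying φ_{ij} ∘ φ_{jk} = γ_{ijk} · φ_{ik} (where γ·φ denotes the map y ↦ γ·φ(y)). Then for all i,j,k,l: (a) h_{ij} ∘ h_{jk} = conj(γ_{ijk}) ∘ h_{ik}, where conj(γ)(g) = γ g γ⁻¹; and (b) γ_{ijk} · γ_{ikl} = h_{ij}(γ_{jkl}) · γ_{ijl}. -/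
import Mathlib


/-- Lemma A1.73: cocycle conditions derived from equivariant injective maps
between sets with effective `G`-actions possessing points with trivial stabilizer. -/
theorem sheaf_group_category_cocycle
    {G : Type*} [Group G] {I : Type*} (Y : I → Type*) [∀ i, MulAction G (Y i)]
    (heff : ∀ i, ∀ g : G, (∀ y : Y i, g • y = y) → g = 1)
    (hfree : ∀ i, ∃ y : Y i, ∀ g : G, g • y = y → g = 1)
    (h : I → I → G ≃* G) (γ : I → I → I → G)
    (φ : ∀ i j, Y j → Y i)
    (hinj : ∀ i j, Function.Injective (φ i j))
    (hequiv : ∀ i j (g : G) (y : Y j), φ i j (g • y) = h i j g • φ i j y)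
    (hcoc : ∀ i j k (y : Y k), φ i j (φ j k y) = γ i j k • φ i k y) :
    (∀ i j k (g : G), h i j (h j k g) = γ i j k * h i k g * (γ i j k)⁻¹) ∧
    (∀ i j k l, γ i j k * γ i k l = h i j (γ j k l) * γ i j l) := by
  -- Step 1: an element fixing the image of `φ i i` is trivial.
  have keyii : ∀ i (c : G), (∀ z : Y i, c • φ i i z = φ i i z) → c = 1 := by
    intro i c hc
    set c' := (h i i).symm c with hc'
    have hceq : h i i c' = c := (h i i).apply_symm_apply c
    have : ∀ z : Y i, c' • z = z := by
      intro z
      apply hinj i i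
      rw [hequiv, hceq, hc z]
    have h1 : c' = 1 := heff i c' this
    rw [← hceq, h1, map_one]
  -- Step 2: an element acting identically on the image of `φ i j` is trivial.
  have key : ∀ i j (a b : G), (∀ y : Y j, a • φ i j y = b • φ i j y) → a = b := by
    intro i j a b hab
    have hfixd : ∀ y : Y j, (b⁻¹ * a) • φ i j y = φ i j y := by
      intro y
      rw [← smul_smul, hab y, smul_smul, inv_mul_cancel, one_smul]
    have hb : ∀ z : Y i, ((γ i j i)⁻¹ * (b⁻¹ * a) * γ i j i) • φ i i z = φ i i z := by
      intro z
      have h1 : (b⁻¹ * a) • φ i j (φ j i z) = φ i j (φ j i z) := hfixd (φ j i z)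
      rw [hcoc i j i z, smul_smul] at h1
      calc ((γ i j i)⁻¹ * (b⁻¹ * a) * γ i j i) • φ i i z
          = (γ i j i)⁻¹ • ((b⁻¹ * a * γ i j i) • φ i i z) := by
            rw [mul_assoc, ← smul_smul]
        _ = (γ i j i)⁻¹ • (γ i j i • φ i i z) := by rw [h1]
        _ = φ i i z := by rw [smul_smul, inv_mul_cancel, one_smul]
    have h2 := keyii i _ hb
    have h3 : b⁻¹ * a = 1 := by
      have := congrArg (fun x => γ i j i * x * (γ i j i)⁻¹) h2
      simpa [mul_assoc] using this
    exact (inv_mul_eq_one.mp h3).symm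
  refine ⟨?_, ?_⟩
  · intro i j k g
    have e3 : ∀ y : Y k, (h i j (h j k g) * γ i j k) • φ i k y
        = (γ i j k * h i k g) • φ i k y := by
      intro y
      have L : φ i j (φ j k (g • y)) = (h i j (h j k g) * γ i j k) • φ i k y := by
        rw [hequiv j k, hequiv i j, hcoc, smul_smul]
      have R : φ i j (φ j k (g • y)) = (γ i j k * h i k g) • φ i k y := by
        rw [hcoc i j k, hequiv i k, smul_smul]
      exact L.symm.trans R
    have hAB : h i j (h j k g) * γ i j k = γ i j k * h i k g := key i k _ _ e3
    have : h i j (h j k g) = γ i j k * h i k g * (γ i j k)⁻¹ := by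
      rw [← hAB]; group
    exact this
  · intro i j k l
    have e3 : ∀ y : Y l, (γ i j k * γ i k l) • φ i l y
        = (h i j (γ j k l) * γ i j l) • φ i l y := by
      intro y
      have L : φ i j (φ j k (φ k l y)) = (γ i j k * γ i k l) • φ i l y := by
        rw [hcoc i j k, hcoc i k l, smul_smul]
      have R : φ i j (φ j k (φ k l y)) = (h i j (γ j k l) * γ i j l) • φ i l y := by
        rw [hcoc j k l, hequiv i j, hcoc i j l, smul_smul]
      exact L.symm.trans R
    exact key i l _ _ e3
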